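/- arXiv:2510.19241 — 5 statements merged into one kernel-verified Lean document; each statement's English description precedes it below -/
import Mathlib

section
/- For a finite discounted MDP, the dual LP objective of any feasible occupancy measure equals the expected discounted return of the policy it induces: if φ satisfies the flow-balance constraints ∑_k φ_{ik} = p₀(i) + γ ∑_{i'} ∑_k P_{i'ik} φ_{i'k} for all states i with φ ≥ 0, then ∑_i ∑_k φ_{ik} (∑_{i'} P_{ii'k} R_{ii'k}) equals the expected discounted return of the stationary policy π(k|i) = φ_{ik} / ∑_{k'} φ_{ik'} (defined arbitrarily when the denominator is zero) started from distribution p₀. -/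
open scoped BigOperators

/-- Joint distribution of state and action at time `t` under stationary policy `π`
started from initial distribution `p0`. -/
noncomputable def visit {S A : Type*} [Fintype S] [Fintype A]
    (P : S → A → S → ℝ) (π : S → A → ℝ) (p0 : S → ℝ) : ℕ → S → A → ℝ
  | 0, i, k => p0 i * π i k
  | (t+1), i, k => (∑ i' : S, ∑ k' : A, visit P π p0 t i' k' * P i' k' i) * π i k

/-- Expected discounted return of stationary policy `π` from initial distribution `p0`. -/
noncomputable def expReturn {S A : Type*} [Fintype S] [Fintype A]
    (P R : S → A → S → ℝ) (γ : ℝ) (π : S → A → ℝ) (p0 : S → ℝ) : ℝ :=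
  ∑' t : ℕ, γ ^ t * ∑ i : S, ∑ k : A, visit P π p0 t i k * ∑ i' : S, P i k i' * R i k i'

section Aux

variable {S A : Type*} [Fintype S] [Fintype A]

lemma visit_nonneg (P : S → A → S → ℝ) (π : S → A → ℝ) (p0 : S → ℝ)
    (hP0 : ∀ i k i', 0 ≤ P i k i') (hp00 : ∀ i, 0 ≤ p0 i) (hπ0 : ∀ i k, 0 ≤ π i k) :
    ∀ t i k, 0 ≤ visit P π p0 t i k := by
  intro t
  induction t with
  | zero => intro i k; exact mul_nonneg (hp00 i) (hπ0 i k)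
  | succ t ih =>
    intro i k
    exact mul_nonneg (Finset.sum_nonneg fun i' _ => Finset.sum_nonneg fun k' _ =>
      mul_nonneg (ih i' k') (hP0 i' k' i)) (hπ0 i k)

lemma visit_zero_marginal (P : S → A → S → ℝ) (π : S → A → ℝ) (p0 : S → ℝ)
    (hπ1 : ∀ i, ∑ k : A, π i k = 1) (i : S) :
    ∑ k : A, visit P π p0 0 i k = p0 i := by
  simp only [visit, ← Finset.mul_sum, hπ1, mul_one]

lemma visit_succ_marginal (P : S → A → S → ℝ) (π : S → A → ℝ) (p0 : S → ℝ)
    (hπ1 : ∀ i, ∑ k : A, π i k = 1) (t : ℕ) (i : S) :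
    ∑ k : A, visit P π p0 (t+1) i k
      = ∑ j : S, ∑ k : A, visit P π p0 t j k * P j k i := by
  simp only [visit, ← Finset.mul_sum, hπ1, mul_one]

lemma visit_eq_marginal (P : S → A → S → ℝ) (π : S → A → ℝ) (p0 : S → ℝ)
    (hπ1 : ∀ i, ∑ k : A, π i k = 1) (t : ℕ) (i : S) (k : A) :
    visit P π p0 t i k = (∑ k' : A, visit P π p0 t i k') * π i k := by
  cases t with
  | zero => simp only [visit, ← Finset.mul_sum, hπ1, mul_one]
  | succ t => simp only [visit, ← Finset.mul_sum, hπ1, mul_one]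

lemma visit_mass (P : S → A → S → ℝ) (π : S → A → ℝ) (p0 : S → ℝ)
    (hP1 : ∀ i k, ∑ i' : S, P i k i' = 1) (hp01 : ∑ i : S, p0 i = 1)
    (hπ1 : ∀ i, ∑ k : A, π i k = 1) :
    ∀ t, ∑ i : S, ∑ k : A, visit P π p0 t i k = 1 := by
  intro t
  induction t with
  | zero =>
    simp only [visit, ← Finset.mul_sum, hπ1, mul_one, hp01]
  | succ t ih =>
    calc ∑ i : S, ∑ k : A, visit P π p0 (t+1) i k
        = ∑ i : S, ∑ j : S, ∑ k : A, visit P π p0 t j k * P j k i := by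
          refine Finset.sum_congr rfl fun i _ => visit_succ_marginal P π p0 hπ1 t i
      _ = ∑ j : S, ∑ k : A, visit P π p0 t j k * ∑ i : S, P j k i := by
          rw [Finset.sum_comm]
          refine Finset.sum_congr rfl fun j _ => ?_
          rw [Finset.sum_comm]
          refine Finset.sum_congr rfl fun k _ => ?_
          rw [Finset.mul_sum]
      _ = 1 := by simp only [hP1, mul_one, ih]

end Aux

theorem dual_objective_eq_expected_return
    {S A : Type*} [Fintype S] [Fintype A] [Nonempty S] [Nonempty A]
    (P R : S → A → S → ℝ) (γ : ℝ) (p0 : S → ℝ) (φ : S → A → ℝ) (π : S → A → ℝ)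
    (hγ0 : 0 ≤ γ) (hγ1 : γ < 1)
    (hP0 : ∀ i k i', 0 ≤ P i k i') (hP1 : ∀ i k, ∑ i' : S, P i k i' = 1)
    (hp00 : ∀ i, 0 ≤ p0 i) (hp01 : ∑ i : S, p0 i = 1)
    (hφ : ∀ i k, 0 ≤ φ i k)
    (hflow : ∀ i, ∑ k : A, φ i k = p0 i + γ * ∑ i' : S, ∑ k : A, P i' k i * φ i' k)
    (hπ0 : ∀ i k, 0 ≤ π i k) (hπ1 : ∀ i, ∑ k : A, π i k = 1)
    (hπφ : ∀ i, (∑ k : A, φ i k) ≠ 0 → ∀ k, π i k = φ i k / ∑ k' : A, φ i k') :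
    ∑ i : S, ∑ k : A, φ i k * (∑ i' : S, P i k i' * R i k i') = expReturn P R γ π p0 := by
  classical
  have hv0 : ∀ t i k, 0 ≤ visit P π p0 t i k := visit_nonneg P π p0 hP0 hp00 hπ0
  have hmass : ∀ t, ∑ i : S, ∑ k : A, visit P π p0 t i k = 1 := visit_mass P π p0 hP1 hp01 hπ1
  have hv1 : ∀ t i k, visit P π p0 t i k ≤ 1 := by
    intro t i k
    calc visit P π p0 t i k ≤ ∑ k' : A, visit P π p0 t i k' :=
          Finset.single_le_sum (fun k' _ => hv0 t i k') (Finset.mem_univ k)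
      _ ≤ ∑ i' : S, ∑ k' : A, visit P π p0 t i' k' :=
          Finset.single_le_sum (fun i' _ => Finset.sum_nonneg fun k' _ => hv0 t i' k')
            (Finset.mem_univ i)
      _ = 1 := hmass t
  have hgeo : Summable (fun t : ℕ => γ ^ t) := summable_geometric_of_lt_one hγ0 hγ1
  have hsum0 : ∀ f : ℕ → ℝ, (∀ t, 0 ≤ f t) → (∀ t, f t ≤ 1) →
      Summable (fun t => γ ^ t * f t) := by
    intro f h0 h1
    refine Summable.of_nonneg_of_le (fun t => mul_nonneg (pow_nonneg hγ0 t) (h0 t))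
      (fun t => ?_) hgeo
    exact mul_le_of_le_one_right (pow_nonneg hγ0 t) (h1 t)
  have hsumv : ∀ i k, Summable (fun t => γ ^ t * visit P π p0 t i k) :=
    fun i k => hsum0 _ (fun t => hv0 t i k) (fun t => hv1 t i k)
  set ν : S → A → ℝ := fun i k => ∑' t, γ ^ t * visit P π p0 t i k with hνdef
  have hν0 : ∀ i k, 0 ≤ ν i k :=
    fun i k => tsum_nonneg fun t => mul_nonneg (pow_nonneg hγ0 t) (hv0 t i k)
  -- marginals of ν
  have hνmarg : ∀ i, ∑ k' : A, ν i k' = ∑' t, γ ^ t * ∑ k' : A, visit P π p0 t i k' := by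
    intro i
    rw [← Summable.tsum_finsetSum (fun k' _ => hsumv i k')]
    refine tsum_congr fun t => ?_
    rw [Finset.mul_sum]
  have hνeq : ∀ i k, ν i k = (∑ k' : A, ν i k') * π i k := by
    intro i k
    rw [hνmarg i, ← tsum_mul_right]
    refine tsum_congr fun t => ?_
    rw [visit_eq_marginal P π p0 hπ1 t i k]; ring
  -- flow equation for ν
  have hνflow : ∀ i, ∑ k : A, ν i k = p0 i + γ * ∑ j : S, ∑ k : A, P j k i * ν j k := by
    intro i
    have hD : Summable (fun t => γ ^ t * ∑ k : A, visit P π p0 t i k) := by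
      apply hsum0
      · intro t; exact Finset.sum_nonneg fun k _ => hv0 t i k
      · intro t
        calc ∑ k : A, visit P π p0 t i k ≤ ∑ i' : S, ∑ k : A, visit P π p0 t i' k :=
              Finset.single_le_sum (fun i' _ => Finset.sum_nonneg fun k _ => hv0 t i' k)
                (Finset.mem_univ i)
          _ = 1 := hmass t
    rw [hνmarg i, Summable.tsum_eq_zero_add hD]
    have h0 : γ ^ 0 * ∑ k : A, visit P π p0 0 i k = p0 i := by
      rw [visit_zero_marginal P π p0 hπ1 i]; ring
    rw [h0]
    congr 1
    calc (∑' t, γ ^ (t+1) * ∑ k : A, visit P π p0 (t+1) i k)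
        = ∑' t, γ * (γ ^ t * ∑ j : S, ∑ k : A, visit P π p0 t j k * P j k i) := by
          refine tsum_congr fun t => ?_
          rw [visit_succ_marginal P π p0 hπ1 t i, pow_succ]; ring
      _ = γ * ∑' t, γ ^ t * ∑ j : S, ∑ k : A, visit P π p0 t j k * P j k i := tsum_mul_left
      _ = γ * ∑' t, ∑ j : S, ∑ k : A, (γ ^ t * visit P π p0 t j k) * P j k i := by
          congr 1
          refine tsum_congr fun t => ?_
          simp only [Finset.mul_sum]
          refine Finset.sum_congr rfl fun j _ => Finset.sum_congr rfl fun k _ => by ring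
      _ = γ * ∑ j : S, ∑ k : A, P j k i * ν j k := by
          congr 1
          rw [Summable.tsum_finsetSum (fun j _ => summable_sum fun k _ => (hsumv j k).mul_right (P j k i))]
          refine Finset.sum_congr rfl fun j _ => ?_
          rw [Summable.tsum_finsetSum (fun k _ => (hsumv j k).mul_right (P j k i))]
          refine Finset.sum_congr rfl fun k _ => ?_
          rw [tsum_mul_right, mul_comm]
  -- φ also factorizes through π
  have hφeq : ∀ i k, φ i k = (∑ k' : A, φ i k') * π i k := by
    intro i k
    by_cases h : (∑ k' : A, φ i k') = 0
    · have h0 : φ i k = 0 :=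
        (Finset.sum_eq_zero_iff_of_nonneg (fun k' _ => hφ i k')).mp h k (Finset.mem_univ k)
      rw [h0, h, zero_mul]
    · rw [hπφ i h k]; field_simp
  -- uniqueness: marginals of φ and ν coincide
  set e : S → ℝ := fun i => (∑ k : A, φ i k) - (∑ k : A, ν i k) with hedef
  have hφν : ∀ j k, φ j k - ν j k = e j * π j k := by
    intro j k
    rw [hφeq j k, hνeq j k, hedef]
    ring
  have he : ∀ i, e i = γ * ∑ j : S, ∑ k : A, P j k i * π j k * e j := by
    intro i
    have h1 : e i = γ * ∑ j : S, ∑ k : A, P j k i * (φ j k - ν j k) := by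
      have hsplit : ∑ j : S, ∑ k : A, P j k i * (φ j k - ν j k)
          = (∑ j : S, ∑ k : A, P j k i * φ j k) - ∑ j : S, ∑ k : A, P j k i * ν j k := by
        simp [Finset.sum_sub_distrib, mul_sub]
      rw [hsplit]
      simp only [hedef]
      rw [hflow i, hνflow i]
      ring
    rw [h1]
    congr 1
    refine Finset.sum_congr rfl fun j _ => Finset.sum_congr rfl fun k _ => ?_
    rw [hφν j k]; ring
  have habs : ∑ i : S, |e i| ≤ γ * ∑ i : S, |e i| := by
    calc ∑ i : S, |e i| ≤ ∑ i : S, γ * ∑ j : S, ∑ k : A, P j k i * π j k * |e j| := by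
          refine Finset.sum_le_sum fun i _ => ?_
          rw [he i, abs_mul, abs_of_nonneg hγ0]
          refine mul_le_mul_of_nonneg_left ?_ hγ0
          calc |∑ j : S, ∑ k : A, P j k i * π j k * e j|
              ≤ ∑ j : S, |∑ k : A, P j k i * π j k * e j| := Finset.abs_sum_le_sum_abs _ _
            _ ≤ ∑ j : S, ∑ k : A, |P j k i * π j k * e j| :=
                Finset.sum_le_sum fun j _ => Finset.abs_sum_le_sum_abs _ _
            _ = ∑ j : S, ∑ k : A, P j k i * π j k * |e j| := by
                refine Finset.sum_congr rfl fun j _ => Finset.sum_congr rfl fun k _ => ?_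
                rw [abs_mul, abs_of_nonneg (mul_nonneg (hP0 j k i) (hπ0 j k))]
      _ = γ * ∑ i : S, ∑ j : S, ∑ k : A, P j k i * π j k * |e j| := by rw [Finset.mul_sum]
      _ = γ * ∑ j : S, ∑ k : A, (∑ i : S, P j k i) * (π j k * |e j|) := by
          congr 1
          rw [Finset.sum_comm]
          refine Finset.sum_congr rfl fun j _ => ?_
          rw [Finset.sum_comm]
          refine Finset.sum_congr rfl fun k _ => ?_
          rw [Finset.sum_mul]
          refine Finset.sum_congr rfl fun i _ => by ring
      _ = γ * ∑ j : S, |e j| := by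
          congr 1
          refine Finset.sum_congr rfl fun j _ => ?_
          simp only [hP1, one_mul, ← Finset.sum_mul, hπ1]
  have hesum0 : ∑ i : S, |e i| = 0 := by
    have hnn : 0 ≤ ∑ i : S, |e i| := Finset.sum_nonneg fun i _ => abs_nonneg _
    nlinarith
  have he0 : ∀ i, e i = 0 := by
    intro i
    have := (Finset.sum_eq_zero_iff_of_nonneg (fun i _ => abs_nonneg (e i))).mp hesum0 i
      (Finset.mem_univ i)
    exact abs_eq_zero.mp this
  have hφνeq : ∀ i k, φ i k = ν i k := by
    intro i k
    have := hφν i k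
    rw [he0 i, zero_mul, sub_eq_zero] at this
    exact this
  -- conclude
  calc ∑ i : S, ∑ k : A, φ i k * (∑ i' : S, P i k i' * R i k i')
      = ∑ i : S, ∑ k : A, ν i k * (∑ i' : S, P i k i' * R i k i') := by
        refine Finset.sum_congr rfl fun i _ => Finset.sum_congr rfl fun k _ => ?_
        rw [hφνeq i k]
    _ = ∑ i : S, ∑ k : A, ∑' t, (γ ^ t * visit P π p0 t i k) * (∑ i' : S, P i k i' * R i k i') := by
        refine Finset.sum_congr rfl fun i _ => Finset.sum_congr rfl fun k _ => ?_
        rw [hνdef, tsum_mul_right]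
    _ = ∑' t, ∑ i : S, ∑ k : A, (γ ^ t * visit P π p0 t i k) * (∑ i' : S, P i k i' * R i k i') := by
        rw [Summable.tsum_finsetSum (fun i _ => summable_sum fun k _ => (hsumv i k).mul_right _)]
        refine Finset.sum_congr rfl fun i _ => ?_
        rw [Summable.tsum_finsetSum (fun k _ => (hsumv i k).mul_right _)]
    _ = expReturn P R γ π p0 := by
        rw [expReturn]
        refine tsum_congr fun t => ?_
        rw [Finset.mul_sum]
        refine Finset.sum_congr rfl fun i _ => ?_
        rw [Finset.mul_sum]
        refine Finset.sum_congr rfl fun k _ => by ring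
end

section
/- Policy improvement theorem: in a finite discounted MDP with γ ∈ [0,1), if π_new is the greedy policy with respect to π_old, i.e., π_new(i) ∈ argmax_k ∑_{i'} P_{ii'k}(R_{ii'k} + γ V^{π_old}_{i'}) for all i, then V^{π_new}_i ≥ V^{π_old}_i for every state i. Moreover, if V^{π_new} = V^{π_old}, then π_old is an optimal policy. -/
open scoped BigOperators

lemma mdp_sub_le_super {S A : Type*} [Fintype S]
    (P R : S → A → S → ℝ) (γ : ℝ) (hγ0 : 0 ≤ γ) (hγ1 : γ < 1)
    (hP0 : ∀ i k i', 0 ≤ P i k i') (hP1 : ∀ i k, ∑ i' : S, P i k i' = 1)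
    (p : S → A) (U W : S → ℝ)
    (hU : ∀ i, U i ≤ ∑ i' : S, P i (p i) i' * (R i (p i) i' + γ * U i'))
    (hW : ∀ i, ∑ i' : S, P i (p i) i' * (R i (p i) i' + γ * W i') ≤ W i) :
    ∀ i, U i ≤ W i := by
  intro i
  by_contra h
  push_neg at h
  obtain ⟨i0, _, hi0⟩ := Finset.exists_max_image Finset.univ
    (fun j => U j - W j) ⟨i, Finset.mem_univ i⟩
  set M := U i0 - W i0 with hM
  have hMpos : 0 < M := lt_of_lt_of_le (by linarith) (hi0 i (Finset.mem_univ i))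
  have key : M ≤ γ * M := by
    have h1 := hU i0
    have h2 := hW i0
    have h3 : M ≤ ∑ i' : S, P i0 (p i0) i' * (γ * (U i' - W i')) := by
      have e : ∑ i' : S, P i0 (p i0) i' * (γ * (U i' - W i'))
          = (∑ i' : S, P i0 (p i0) i' * (R i0 (p i0) i' + γ * U i'))
            - ∑ i' : S, P i0 (p i0) i' * (R i0 (p i0) i' + γ * W i') := by
        rw [← Finset.sum_sub_distrib]
        exact Finset.sum_congr rfl (fun _ _ => by ring)
      rw [e]; linarith
    have h4 : ∑ i' : S, P i0 (p i0) i' * (γ * (U i' - W i'))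
        ≤ ∑ i' : S, P i0 (p i0) i' * (γ * M) := by
      refine Finset.sum_le_sum (fun j _ => ?_)
      exact mul_le_mul_of_nonneg_left
        (mul_le_mul_of_nonneg_left (hi0 j (Finset.mem_univ j)) hγ0) (hP0 _ _ _)
    have h5 : ∑ i' : S, P i0 (p i0) i' * (γ * M) = γ * M := by
      rw [← Finset.sum_mul, hP1]; ring
    linarith
  nlinarith

theorem policy_improvement
    {S A : Type*} [Fintype S] [Fintype A] [Nonempty A]
    (P R : S → A → S → ℝ) (γ : ℝ)
    (hγ0 : 0 ≤ γ) (hγ1 : γ < 1)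
    (hP0 : ∀ i k i', 0 ≤ P i k i') (hP1 : ∀ i k, ∑ i' : S, P i k i' = 1)
    (πold πnew : S → A) (Vold Vnew : S → ℝ)
    (hVold : ∀ i, Vold i = ∑ i' : S, P i (πold i) i' * (R i (πold i) i' + γ * Vold i'))
    (hVnew : ∀ i, Vnew i = ∑ i' : S, P i (πnew i) i' * (R i (πnew i) i' + γ * Vnew i'))
    (hgreedy : ∀ i k, ∑ i' : S, P i k i' * (R i k i' + γ * Vold i')
        ≤ ∑ i' : S, P i (πnew i) i' * (R i (πnew i) i' + γ * Vold i')) :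
    (∀ i, Vold i ≤ Vnew i) ∧
    (Vnew = Vold →
      ∀ (π' : S → A) (V' : S → ℝ),
        (∀ i, V' i = ∑ i' : S, P i (π' i) i' * (R i (π' i) i' + γ * V' i')) →
        ∀ i, V' i ≤ Vold i) := by
  constructor
  · exact mdp_sub_le_super P R γ hγ0 hγ1 hP0 hP1 πnew Vold Vnew
      (fun i => (hVold i).le.trans (hgreedy i (πold i)))
      (fun i => (hVnew i).ge)
  · intro hEq π' V' hV'
    refine mdp_sub_le_super P R γ hγ0 hγ1 hP0 hP1 π' V' Vold
      (fun i => (hV' i).le) (fun i => ?_)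
    have := hgreedy i (π' i)
    have := hVnew i
    rw [hEq] at this
    linarith
end

section
/- In a finite discounted MDP with γ ∈ [0,1), there exists a deterministic stationary policy π* such that V^{π*}_i = max over all stationary (possibly stochastic) policies π of V^π_i, simultaneously for all states i; moreover π* can be taken as any policy greedy with respect to the fixed point V* of the Bellman optimality operator. -/
open scoped BigOperators Classical

/-- Value of a stationary (possibly stochastic) policy started from state `i`. -/
noncomputable def polValue {S A : Type*} [Fintype S] [Fintype A]
    (P R : S → A → S → ℝ) (γ : ℝ) (π : S → A → ℝ) (i : S) : ℝ :=
  expReturn P R γ π (fun j => if j = i then 1 else 0)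

/-- The deterministic policy induced by a state-to-action map. -/
noncomputable def detPol {S A : Type*} (g : S → A) : S → A → ℝ :=
  fun i k => if k = g i then 1 else 0

/-- The Bellman optimality operator. -/
noncomputable def bellman {S A : Type*} [Fintype S] [Fintype A] [Nonempty A]
    (P R : S → A → S → ℝ) (γ : ℝ) (V : S → ℝ) : S → ℝ :=
  fun i => Finset.univ.sup' Finset.univ_nonempty
    (fun k : A => ∑ i' : S, P i k i' * (R i k i' + γ * V i'))

set_option linter.unusedSectionVars false

namespace MDPaux

variable {S A : Type*} [Fintype S] [Fintype A]

/-- one-step expected reward -/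
noncomputable def rew (P R : S → A → S → ℝ) (i : S) (k : A) : ℝ := ∑ i' : S, P i k i' * R i k i'

/-- one-step pushforward of a distribution -/
noncomputable def stepD (P : S → A → S → ℝ) (π : S → A → ℝ) (p0 : S → ℝ) (j : S) : ℝ :=
  ∑ i' : S, ∑ k' : A, p0 i' * π i' k' * P i' k' j

lemma visit_nonneg (P : S → A → S → ℝ) (π : S → A → ℝ) (p0 : S → ℝ)
    (hπ0 : ∀ i k, 0 ≤ π i k) (hP0 : ∀ i k i', 0 ≤ P i k i')
    (hp0 : ∀ j, 0 ≤ p0 j) : ∀ t i k, 0 ≤ visit P π p0 t i k := by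
  intro t
  induction t with
  | zero => intro i k; exact mul_nonneg (hp0 i) (hπ0 i k)
  | succ t ih =>
      intro i k
      exact mul_nonneg (Finset.sum_nonneg fun i' _ => Finset.sum_nonneg fun k' _ =>
        mul_nonneg (ih i' k') (hP0 i' k' i)) (hπ0 i k)

lemma visit_mass (P : S → A → S → ℝ) (π : S → A → ℝ) (p0 : S → ℝ)
    (hπ1 : ∀ i, ∑ k : A, π i k = 1) (hP1 : ∀ i k, ∑ i' : S, P i k i' = 1) :
    ∀ t, ∑ i : S, ∑ k : A, visit P π p0 t i k = ∑ j : S, p0 j := by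
  intro t
  induction t with
  | zero =>
      simp only [visit]
      refine Finset.sum_congr rfl fun i _ => ?_
      rw [← Finset.mul_sum, hπ1 i, mul_one]
  | succ t ih =>
      simp only [visit]
      calc ∑ i : S, ∑ k : A, (∑ i' : S, ∑ k' : A, visit P π p0 t i' k' * P i' k' i) * π i k
          = ∑ i : S, (∑ i' : S, ∑ k' : A, visit P π p0 t i' k' * P i' k' i) := by
            refine Finset.sum_congr rfl fun i _ => ?_
            rw [← Finset.mul_sum, hπ1 i, mul_one]
        _ = ∑ i' : S, ∑ k' : A, visit P π p0 t i' k' * (∑ i : S, P i' k' i) := by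
            rw [Finset.sum_comm]
            refine Finset.sum_congr rfl fun i' _ => ?_
            rw [Finset.sum_comm]
            refine Finset.sum_congr rfl fun k' _ => ?_
            rw [Finset.mul_sum]
        _ = ∑ j : S, p0 j := by
            rw [← ih]
            refine Finset.sum_congr rfl fun i' _ => Finset.sum_congr rfl fun k' _ => ?_
            rw [hP1, mul_one]

lemma visit_shift (P : S → A → S → ℝ) (π : S → A → ℝ) (p0 : S → ℝ) :
    ∀ t i k, visit P π p0 (t+1) i k = visit P π (stepD P π p0) t i k := by
  intro t
  induction t with
  | zero =>
      intro i k
      simp only [visit, stepD]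
  | succ t ih =>
      intro i k
      show (∑ i' : S, ∑ k' : A, visit P π p0 (t+1) i' k' * P i' k' i) * π i k = _
      simp only [ih]
      rfl

/-- Linearity of `visit` in the initial distribution: expansion over Dirac deltas. -/
lemma visit_delta (P : S → A → S → ℝ) (π : S → A → ℝ) (p0 : S → ℝ) :
    ∀ t i k, visit P π p0 t i k
      = ∑ j : S, p0 j * visit P π (fun j' => if j' = j then 1 else 0) t i k := by
  intro t
  induction t with
  | zero =>
      intro i k
      simp only [visit]
      rw [Finset.sum_eq_single i]
      · simp
      · intro j _ hj
        simp [Ne.symm hj]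
      · simp
  | succ t ih =>
      intro i k
      simp only [visit]
      simp only [ih]
      set v : S → S → A → ℝ := fun j i' k' => visit P π (fun j' => if j' = j then 1 else 0) t i' k' with hv
      have key : ∀ c : S → A → ℝ,
          ∑ i' : S, ∑ k' : A, (∑ j : S, p0 j * v j i' k') * c i' k'
            = ∑ j : S, p0 j * ∑ i' : S, ∑ k' : A, v j i' k' * c i' k' := by
        intro c
        calc ∑ i' : S, ∑ k' : A, (∑ j : S, p0 j * v j i' k') * c i' k'
            = ∑ i' : S, ∑ k' : A, ∑ j : S, p0 j * v j i' k' * c i' k' := by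
              refine Finset.sum_congr rfl fun i' _ => Finset.sum_congr rfl fun k' _ => ?_
              rw [Finset.sum_mul]
          _ = ∑ i' : S, ∑ j : S, ∑ k' : A, p0 j * v j i' k' * c i' k' := by
              exact Finset.sum_congr rfl fun i' _ => Finset.sum_comm
          _ = ∑ j : S, ∑ i' : S, ∑ k' : A, p0 j * v j i' k' * c i' k' := Finset.sum_comm
          _ = ∑ j : S, p0 j * ∑ i' : S, ∑ k' : A, v j i' k' * c i' k' := by
              refine Finset.sum_congr rfl fun j _ => ?_
              rw [Finset.mul_sum]
              refine Finset.sum_congr rfl fun i' _ => ?_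
              rw [Finset.mul_sum]
              exact Finset.sum_congr rfl fun k' _ => by ring
      rw [key (fun i' k' => P i' k' i), Finset.sum_mul]
      exact Finset.sum_congr rfl fun j _ => by ring

variable [Nonempty S] [Nonempty A]

/-- uniform bound on the one-step reward -/
noncomputable def rbound (P R : S → A → S → ℝ) : ℝ :=
  Finset.univ.sup' Finset.univ_nonempty (fun p : S × A => |rew P R p.1 p.2|)

lemma abs_rew_le (P R : S → A → S → ℝ) (i : S) (k : A) : |rew P R i k| ≤ rbound P R :=
  Finset.le_sup' (fun p : S × A => |rew P R p.1 p.2|) (Finset.mem_univ (i, k))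

lemma rbound_nonneg (P R : S → A → S → ℝ) : 0 ≤ rbound P R :=
  le_trans (abs_nonneg _) (abs_rew_le P R (Classical.arbitrary S) (Classical.arbitrary A))

lemma summable_ret (P R : S → A → S → ℝ) (γ : ℝ) (π : S → A → ℝ) (p0 : S → ℝ)
    (hγ0 : 0 ≤ γ) (hγ1 : γ < 1)
    (hπ0 : ∀ i k, 0 ≤ π i k) (hP0 : ∀ i k i', 0 ≤ P i k i')
    (hπ1 : ∀ i, ∑ k : A, π i k = 1) (hP1 : ∀ i k, ∑ i' : S, P i k i' = 1)
    (hp0 : ∀ j, 0 ≤ p0 j) :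
    Summable (fun t : ℕ =>
      γ ^ t * ∑ i : S, ∑ k : A, visit P π p0 t i k * rew P R i k) := by
  have hb : Summable (fun t : ℕ => (rbound P R * ∑ j : S, p0 j) * γ ^ t) :=
    (summable_geometric_of_lt_one hγ0 hγ1).mul_left _
  refine Summable.of_norm_bounded hb ?_
  intro t
  have h1 : |∑ i : S, ∑ k : A, visit P π p0 t i k * rew P R i k|
      ≤ rbound P R * ∑ j : S, p0 j := by
    calc |∑ i : S, ∑ k : A, visit P π p0 t i k * rew P R i k|
        ≤ ∑ i : S, ∑ k : A, |visit P π p0 t i k * rew P R i k| := by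
          refine (Finset.abs_sum_le_sum_abs _ _).trans ?_
          exact Finset.sum_le_sum fun i _ => Finset.abs_sum_le_sum_abs _ _
      _ ≤ ∑ i : S, ∑ k : A, visit P π p0 t i k * rbound P R := by
          refine Finset.sum_le_sum fun i _ => Finset.sum_le_sum fun k _ => ?_
          rw [abs_mul, abs_of_nonneg (visit_nonneg P π p0 hπ0 hP0 hp0 t i k)]
          exact mul_le_mul_of_nonneg_left (abs_rew_le P R i k)
            (visit_nonneg P π p0 hπ0 hP0 hp0 t i k)
      _ = rbound P R * ∑ j : S, p0 j := by
          rw [← visit_mass P π p0 hπ1 hP1 t]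
          rw [Finset.mul_sum]
          refine Finset.sum_congr rfl fun i _ => ?_
          rw [Finset.mul_sum]
          refine Finset.sum_congr rfl fun k _ => mul_comm _ _
  calc ‖γ ^ t * ∑ i : S, ∑ k : A, visit P π p0 t i k * rew P R i k‖
      = γ ^ t * |∑ i : S, ∑ k : A, visit P π p0 t i k * rew P R i k| := by
        rw [Real.norm_eq_abs, abs_mul, abs_of_nonneg (pow_nonneg hγ0 t)]
    _ ≤ γ ^ t * (rbound P R * ∑ j : S, p0 j) :=
        mul_le_mul_of_nonneg_left h1 (pow_nonneg hγ0 t)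
    _ = (rbound P R * ∑ j : S, p0 j) * γ ^ t := mul_comm _ _

lemma expReturn_eq (P R : S → A → S → ℝ) (γ : ℝ) (π : S → A → ℝ) (p0 : S → ℝ) :
    expReturn P R γ π p0
      = ∑' t : ℕ, γ ^ t * ∑ i : S, ∑ k : A, visit P π p0 t i k * rew P R i k := rfl

set_option linter.unusedSectionVars false

lemma sum_expand (p0 : S → ℝ) (v : S → S → A → ℝ) (c : S → A → ℝ) :
    ∑ i : S, ∑ k : A, (∑ j : S, p0 j * v j i k) * c i k
      = ∑ j : S, p0 j * ∑ i : S, ∑ k : A, v j i k * c i k := by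
  calc ∑ i : S, ∑ k : A, (∑ j : S, p0 j * v j i k) * c i k
      = ∑ i : S, ∑ k : A, ∑ j : S, p0 j * v j i k * c i k := by
        refine Finset.sum_congr rfl fun i _ => Finset.sum_congr rfl fun k _ => ?_
        rw [Finset.sum_mul]
    _ = ∑ i : S, ∑ j : S, ∑ k : A, p0 j * v j i k * c i k :=
        Finset.sum_congr rfl fun i _ => Finset.sum_comm
    _ = ∑ j : S, ∑ i : S, ∑ k : A, p0 j * v j i k * c i k := Finset.sum_comm
    _ = ∑ j : S, p0 j * ∑ i : S, ∑ k : A, v j i k * c i k := by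
        refine Finset.sum_congr rfl fun j _ => ?_
        rw [Finset.mul_sum]
        refine Finset.sum_congr rfl fun i _ => ?_
        rw [Finset.mul_sum]
        exact Finset.sum_congr rfl fun k _ => by ring

variable (P R : S → A → S → ℝ) (γ : ℝ) (π : S → A → ℝ)

lemma expReturn_step (hγ0 : 0 ≤ γ) (hγ1 : γ < 1)
    (hπ0 : ∀ i k, 0 ≤ π i k) (hP0 : ∀ i k i', 0 ≤ P i k i')
    (hπ1 : ∀ i, ∑ k : A, π i k = 1) (hP1 : ∀ i k, ∑ i' : S, P i k i' = 1)
    (p0 : S → ℝ) (hp0 : ∀ j, 0 ≤ p0 j) :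
    expReturn P R γ π p0
      = (∑ i : S, ∑ k : A, (p0 i * π i k) * rew P R i k)
        + γ * expReturn P R γ π (stepD P π p0) := by
  have hs := summable_ret P R γ π p0 hγ0 hγ1 hπ0 hP0 hπ1 hP1 hp0
  rw [expReturn_eq, Summable.tsum_eq_zero_add hs]
  congr 1
  · simp only [pow_zero, one_mul]
    rfl
  · rw [expReturn_eq, ← tsum_mul_left]
    refine tsum_congr fun n => ?_
    simp only [visit_shift P π p0 n]
    rw [pow_succ]
    ring

lemma expReturn_linear (hγ0 : 0 ≤ γ) (hγ1 : γ < 1)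
    (hπ0 : ∀ i k, 0 ≤ π i k) (hP0 : ∀ i k i', 0 ≤ P i k i')
    (hπ1 : ∀ i, ∑ k : A, π i k = 1) (hP1 : ∀ i k, ∑ i' : S, P i k i' = 1)
    (p0 : S → ℝ) :
    expReturn P R γ π p0
      = ∑ j : S, p0 j *
          expReturn P R γ π (fun j' => if j' = j then 1 else 0) := by
  have hδ : ∀ j : S, Summable (fun t : ℕ => p0 j * (γ ^ t *
      ∑ i : S, ∑ k : A, visit P π (fun j' => if j' = j then 1 else 0) t i k * rew P R i k)) := by
    intro j
    exact (summable_ret P R γ π _ hγ0 hγ1 hπ0 hP0 hπ1 hP1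
      (fun j' => by by_cases h : j' = j <;> simp [h])).mul_left _
  rw [expReturn_eq]
  calc ∑' t : ℕ, γ ^ t * ∑ i : S, ∑ k : A, visit P π p0 t i k * rew P R i k
      = ∑' t : ℕ, ∑ j : S, p0 j * (γ ^ t *
          ∑ i : S, ∑ k : A, visit P π (fun j' => if j' = j then 1 else 0) t i k * rew P R i k) := by
        refine tsum_congr fun t => ?_
        conv_lhs => rw [show (∑ i : S, ∑ k : A, visit P π p0 t i k * rew P R i k)
          = ∑ j : S, p0 j * ∑ i : S, ∑ k : A,
              visit P π (fun j' => if j' = j then 1 else 0) t i k * rew P R i k from by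
            rw [← sum_expand p0 _ (rew P R)]
            refine Finset.sum_congr rfl fun i _ => Finset.sum_congr rfl fun k _ => ?_
            rw [← visit_delta P π p0 t i k]]
        rw [Finset.mul_sum]
        exact Finset.sum_congr rfl fun j _ => by ring
    _ = ∑ j : S, ∑' t : ℕ, p0 j * (γ ^ t *
          ∑ i : S, ∑ k : A, visit P π (fun j' => if j' = j then 1 else 0) t i k * rew P R i k) :=
        Summable.tsum_finsetSum (fun j _ => hδ j)
    _ = ∑ j : S, p0 j * expReturn P R γ π (fun j' => if j' = j then 1 else 0) := by
        refine Finset.sum_congr rfl fun j _ => ?_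
        rw [expReturn_eq, tsum_mul_left]

end MDPaux

namespace MDPaux

variable {S A : Type*} [Fintype S] [Fintype A] [Nonempty S] [Nonempty A]

lemma polValue_eq (P R : S → A → S → ℝ) (γ : ℝ) (π : S → A → ℝ)
    (hγ0 : 0 ≤ γ) (hγ1 : γ < 1)
    (hπ0 : ∀ i k, 0 ≤ π i k) (hP0 : ∀ i k i', 0 ≤ P i k i')
    (hπ1 : ∀ i, ∑ k : A, π i k = 1) (hP1 : ∀ i k, ∑ i' : S, P i k i' = 1)
    (i : S) :
    polValue P R γ π i
      = ∑ k : A, π i k * (rew P R i k + γ * ∑ j : S, P i k j * polValue P R γ π j) := by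
  have hδ0 : ∀ j, 0 ≤ (fun j' => if j' = i then (1:ℝ) else 0) j := by
    intro j; by_cases h : j = i <;> simp [h]
  show expReturn P R γ π (fun j => if j = i then 1 else 0) = _
  rw [expReturn_step P R γ π hγ0 hγ1 hπ0 hP0 hπ1 hP1 _ hδ0,
      expReturn_linear P R γ π hγ0 hγ1 hπ0 hP0 hπ1 hP1 (stepD P π _)]
  simp only [polValue, stepD]
  simp only [ite_mul, one_mul, zero_mul, mul_ite, mul_zero, Finset.sum_ite_eq', Finset.sum_ite_eq,
    Finset.mem_univ, if_true]
  have pull : ∀ (f : S → A → ℝ), (∑ x : S, ∑ y : A, if x = i then f x y else 0) = ∑ y : A, f i y := by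
    intro f
    rw [Finset.sum_comm]
    simp
  simp only [pull]
  have h3 : γ * ∑ x : S, (∑ y : A, π i y * P i y x) *
        expReturn P R γ π (fun j => if j = x then 1 else 0)
      = ∑ y : A, π i y * (γ * ∑ x : S, P i y x *
        expReturn P R γ π (fun j => if j = x then 1 else 0)) := by
    calc γ * ∑ x : S, (∑ y : A, π i y * P i y x) *
          expReturn P R γ π (fun j => if j = x then 1 else 0)
        = γ * ∑ x : S, ∑ y : A, π i y * P i y x *
            expReturn P R γ π (fun j => if j = x then 1 else 0) := by
          congr 1
          exact Finset.sum_congr rfl fun x _ => Finset.sum_mul _ _ _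
      _ = γ * ∑ y : A, ∑ x : S, π i y * P i y x *
            expReturn P R γ π (fun j => if j = x then 1 else 0) := by
          rw [Finset.sum_comm]
      _ = ∑ y : A, π i y * (γ * ∑ x : S, P i y x *
            expReturn P R γ π (fun j => if j = x then 1 else 0)) := by
          rw [Finset.mul_sum]
          refine Finset.sum_congr rfl fun y _ => ?_
          rw [Finset.mul_sum, Finset.mul_sum, Finset.mul_sum]
          exact Finset.sum_congr rfl fun x _ => by ring
  rw [h3, ← Finset.sum_add_distrib]
  exact Finset.sum_congr rfl fun y _ => by ring

lemma term_split (P R : S → A → S → ℝ) (γ : ℝ) (V : S → ℝ) (i : S) (k : A) :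
    ∑ i' : S, P i k i' * (R i k i' + γ * V i')
      = rew P R i k + γ * ∑ i' : S, P i k i' * V i' := by
  rw [rew, Finset.mul_sum, ← Finset.sum_add_distrib]
  exact Finset.sum_congr rfl fun i' _ => by ring

lemma bellman_diff_le (P R : S → A → S → ℝ) (γ : ℝ)
    (hγ0 : 0 ≤ γ) (hP0 : ∀ i k i', 0 ≤ P i k i') (hP1 : ∀ i k, ∑ i' : S, P i k i' = 1)
    (V W : S → ℝ) (i : S) :
    bellman P R γ V i - bellman P R γ W i ≤ γ * dist V W := by
  have hterm : ∀ k : A, (∑ i' : S, P i k i' * (R i k i' + γ * V i'))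
      ≤ (∑ i' : S, P i k i' * (R i k i' + γ * W i')) + γ * dist V W := by
    intro k
    have hdiff : (∑ i' : S, P i k i' * (R i k i' + γ * V i'))
        - (∑ i' : S, P i k i' * (R i k i' + γ * W i'))
        = γ * ∑ i' : S, P i k i' * (V i' - W i') := by
      rw [← Finset.sum_sub_distrib, Finset.mul_sum]
      exact Finset.sum_congr rfl fun i' _ => by ring
    have hb : ∑ i' : S, P i k i' * (V i' - W i') ≤ dist V W := by
      calc ∑ i' : S, P i k i' * (V i' - W i')
          ≤ ∑ i' : S, P i k i' * dist V W := by
            refine Finset.sum_le_sum fun i' _ => ?_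
            refine mul_le_mul_of_nonneg_left ?_ (hP0 i k i')
            exact (le_abs_self _).trans (by rw [← Real.dist_eq]; exact dist_le_pi_dist V W i')
        _ = dist V W := by rw [← Finset.sum_mul, hP1, one_mul]
    nlinarith [mul_le_mul_of_nonneg_left hb hγ0]
  have h1 : bellman P R γ V i ≤ bellman P R γ W i + γ * dist V W := by
    refine Finset.sup'_le _ _ fun k _ => (hterm k).trans ?_
    have := Finset.le_sup' (fun k : A => ∑ i' : S, P i k i' * (R i k i' + γ * W i'))
      (Finset.mem_univ k)
    exact add_le_add this le_rfl
  linarith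

lemma exists_bellman_fixed (P R : S → A → S → ℝ) (γ : ℝ)
    (hγ0 : 0 ≤ γ) (hγ1 : γ < 1)
    (hP0 : ∀ i k i', 0 ≤ P i k i') (hP1 : ∀ i k, ∑ i' : S, P i k i' = 1) :
    ∃ V : S → ℝ, bellman P R γ V = V := by
  set K : NNReal := ⟨γ, hγ0⟩ with hKdef
  have hK : K < 1 := by
    rw [← NNReal.coe_lt_coe]
    exact_mod_cast hγ1
  have hlip : LipschitzWith K (bellman P R γ) := by
    refine LipschitzWith.of_dist_le_mul fun V W => ?_
    have hKc : (K : ℝ) = γ := rfl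
    rw [hKc]
    rw [dist_pi_le_iff (mul_nonneg hγ0 dist_nonneg)]
    intro i
    rw [Real.dist_eq, abs_sub_le_iff]
    exact ⟨bellman_diff_le P R γ hγ0 hP0 hP1 V W i,
      by rw [dist_comm]; exact bellman_diff_le P R γ hγ0 hP0 hP1 W V i⟩
  have hc : ContractingWith K (bellman P R γ) := ⟨hK, hlip⟩
  exact ⟨hc.fixedPoint (bellman P R γ), hc.fixedPoint_isFixedPt⟩

end MDPaux

open MDPaux

theorem exists_optimal_deterministic_policy
    {S A : Type*} [Fintype S] [Fintype A] [Nonempty S] [Nonempty A]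
    (P R : S → A → S → ℝ) (γ : ℝ)
    (hγ0 : 0 ≤ γ) (hγ1 : γ < 1)
    (hP0 : ∀ i k i', 0 ≤ P i k i') (hP1 : ∀ i k, ∑ i' : S, P i k i' = 1) :
    ∃ Vstar : S → ℝ, bellman P R γ Vstar = Vstar ∧
      (∃ g : S → A, ∀ i k, (∑ i' : S, P i k i' * (R i k i' + γ * Vstar i'))
          ≤ ∑ i' : S, P i (g i) i' * (R i (g i) i' + γ * Vstar i')) ∧
      (∀ g : S → A,
        (∀ i k, (∑ i' : S, P i k i' * (R i k i' + γ * Vstar i'))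
            ≤ ∑ i' : S, P i (g i) i' * (R i (g i) i' + γ * Vstar i')) →
        (∀ i, polValue P R γ (detPol g) i = Vstar i) ∧
        ∀ π : S → A → ℝ, (∀ i k, 0 ≤ π i k) → (∀ i, ∑ k : A, π i k = 1) →
          ∀ i, polValue P R γ π i ≤ polValue P R γ (detPol g) i) := by
  obtain ⟨Vs, hVs⟩ := exists_bellman_fixed P R γ hγ0 hγ1 hP0 hP1
  have hub : ∀ i k, (∑ i' : S, P i k i' * (R i k i' + γ * Vs i')) ≤ Vs i := by
    intro i k
    conv_rhs => rw [← hVs]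
    exact Finset.le_sup' (fun k : A => ∑ i' : S, P i k i' * (R i k i' + γ * Vs i'))
      (Finset.mem_univ k)
  refine ⟨Vs, hVs, ?_, ?_⟩
  · -- greedy policy exists
    choose g hg1 hg2 using fun i : S =>
      Finset.exists_mem_eq_sup' (Finset.univ_nonempty (α := A))
        (fun k : A => ∑ i' : S, P i k i' * (R i k i' + γ * Vs i'))
    refine ⟨g, fun i k => ?_⟩
    rw [← hg2 i]
    exact Finset.le_sup' (fun k : A => ∑ i' : S, P i k i' * (R i k i' + γ * Vs i'))
      (Finset.mem_univ k)
  · intro g hgreedy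
    have hd0 : ∀ i k, 0 ≤ detPol g i k := by
      intro i k; unfold detPol; by_cases h : k = g i <;> simp [h]
    have hd1 : ∀ i, ∑ k : A, detPol g i k = 1 := by
      intro i; simp [detPol]
    have hVt : ∀ i, Vs i = ∑ i' : S, P i (g i) i' * (R i (g i) i' + γ * Vs i') := by
      intro i
      have h1 : bellman P R γ Vs i
          ≤ ∑ i' : S, P i (g i) i' * (R i (g i) i' + γ * Vs i') :=
        Finset.sup'_le _ _ fun k _ => hgreedy i k
      rw [hVs] at h1
      exact le_antisymm h1 (hub i (g i))
    set W : S → ℝ := polValue P R γ (detPol g) with hW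
    have hWeq : ∀ i, W i = rew P R i (g i) + γ * ∑ j : S, P i (g i) j * W j := by
      intro i
      have h := polValue_eq P R γ (detPol g) hγ0 hγ1 hd0 hP0 hd1 hP1 i
      rw [Finset.sum_eq_single (g i)] at h
      · rw [show W i = polValue P R γ (detPol g) i from rfl, h]
        simp [detPol]
        left; rfl
      · intro k _ hk; simp [detPol, hk]
      · simp
    have hVt' : ∀ i, Vs i = rew P R i (g i) + γ * ∑ j : S, P i (g i) j * Vs j := by
      intro i; rw [hVt i, term_split]
    have hmain : ∀ i, W i = Vs i := by
      set D : ℝ := Finset.univ.sup' Finset.univ_nonempty (fun i : S => |W i - Vs i|) with hD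
      have hDub : ∀ i, |W i - Vs i| ≤ γ * D := by
        intro i
        have e : ∑ j : S, P i (g i) j * (W j - Vs j)
            = (∑ j : S, P i (g i) j * W j) - ∑ j : S, P i (g i) j * Vs j := by
          rw [← Finset.sum_sub_distrib]
          exact Finset.sum_congr rfl fun j _ => by ring
        have hdiff : W i - Vs i = γ * ∑ j : S, P i (g i) j * (W j - Vs j) := by
          rw [e, hWeq i, hVt' i]; ring
        rw [hdiff, abs_mul, abs_of_nonneg hγ0]
        refine mul_le_mul_of_nonneg_left ?_ hγ0
        calc |∑ j : S, P i (g i) j * (W j - Vs j)|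
            ≤ ∑ j : S, |P i (g i) j * (W j - Vs j)| := Finset.abs_sum_le_sum_abs _ _
          _ ≤ ∑ j : S, P i (g i) j * D := by
              refine Finset.sum_le_sum fun j _ => ?_
              rw [abs_mul, abs_of_nonneg (hP0 i (g i) j)]
              exact mul_le_mul_of_nonneg_left
                (Finset.le_sup' (fun i : S => |W i - Vs i|) (Finset.mem_univ j))
                (hP0 i (g i) j)
          _ = D := by rw [← Finset.sum_mul, hP1, one_mul]
      obtain ⟨i0, _, hi0⟩ := Finset.exists_mem_eq_sup' (Finset.univ_nonempty (α := S))
        (fun i : S => |W i - Vs i|)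
      have hD0 : 0 ≤ D := by rw [hD, hi0]; exact abs_nonneg _
      have hDle : D ≤ γ * D := by
        calc D = |W i0 - Vs i0| := by rw [hD, hi0]
          _ ≤ γ * D := hDub i0
      have hDz : D ≤ 0 := by nlinarith
      intro i
      have h1 : |W i - Vs i| ≤ 0 := (hDub i).trans (by nlinarith)
      have h2 := abs_eq_zero.mp (le_antisymm h1 (abs_nonneg _))
      linarith
    refine ⟨hmain, ?_⟩
    intro π hπ0 hπ1 i
    set U : S → ℝ := polValue P R γ π with hUdef
    set d : ℝ := Finset.univ.sup' Finset.univ_nonempty (fun i : S => U i - Vs i) with hd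
    have hdub : ∀ i, U i - Vs i ≤ γ * d := by
      intro i
      have hUeq : U i = ∑ k : A, π i k * (rew P R i k + γ * ∑ j : S, P i k j * U j) :=
        polValue_eq P R γ π hγ0 hγ1 hπ0 hP0 hπ1 hP1 i
      have hVlb : ∑ k : A, π i k * (rew P R i k + γ * ∑ j : S, P i k j * Vs j) ≤ Vs i := by
        calc ∑ k : A, π i k * (rew P R i k + γ * ∑ j : S, P i k j * Vs j)
            ≤ ∑ k : A, π i k * Vs i := by
              refine Finset.sum_le_sum fun k _ => ?_
              refine mul_le_mul_of_nonneg_left ?_ (hπ0 i k)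
              rw [← term_split]
              exact hub i k
          _ = Vs i := by rw [← Finset.sum_mul, hπ1, one_mul]
      have hstep : U i - ∑ k : A, π i k * (rew P R i k + γ * ∑ j : S, P i k j * Vs j)
          ≤ γ * d := by
        rw [hUeq, ← Finset.sum_sub_distrib]
        have hterm : ∀ k : A, π i k * (rew P R i k + γ * ∑ j : S, P i k j * U j)
            - π i k * (rew P R i k + γ * ∑ j : S, P i k j * Vs j)
            = π i k * (γ * ∑ j : S, P i k j * (U j - Vs j)) := by
          intro k
          have e : ∑ j : S, P i k j * (U j - Vs j)
              = (∑ j : S, P i k j * U j) - ∑ j : S, P i k j * Vs j := by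
            rw [← Finset.sum_sub_distrib]
            exact Finset.sum_congr rfl fun j _ => by ring
          rw [e]; ring
        calc ∑ k : A, (π i k * (rew P R i k + γ * ∑ j : S, P i k j * U j)
              - π i k * (rew P R i k + γ * ∑ j : S, P i k j * Vs j))
            = ∑ k : A, π i k * (γ * ∑ j : S, P i k j * (U j - Vs j)) :=
              Finset.sum_congr rfl fun k _ => hterm k
          _ ≤ ∑ k : A, π i k * (γ * d) := by
              refine Finset.sum_le_sum fun k _ => ?_
              refine mul_le_mul_of_nonneg_left ?_ (hπ0 i k)
              refine mul_le_mul_of_nonneg_left ?_ hγ0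
              calc ∑ j : S, P i k j * (U j - Vs j)
                  ≤ ∑ j : S, P i k j * d := by
                    refine Finset.sum_le_sum fun j _ => ?_
                    exact mul_le_mul_of_nonneg_left
                      (Finset.le_sup' (fun i : S => U i - Vs i) (Finset.mem_univ j))
                      (hP0 i k j)
                _ = d := by rw [← Finset.sum_mul, hP1, one_mul]
          _ = γ * d := by rw [← Finset.sum_mul, hπ1, one_mul]
      linarith
    obtain ⟨i0, _, hi0⟩ := Finset.exists_mem_eq_sup' (Finset.univ_nonempty (α := S))
      (fun i : S => U i - Vs i)
    have hdle : d ≤ γ * d := by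
      calc d = U i0 - Vs i0 := by rw [hd, hi0]
        _ ≤ γ * d := hdub i0
    have hd0' : U i0 - Vs i0 ≤ d :=
      Finset.le_sup' (fun i : S => U i - Vs i) (Finset.mem_univ i0)
    have hdz : d ≤ 0 := by nlinarith
    have h1 : U i - Vs i ≤ d := Finset.le_sup' (fun i : S => U i - Vs i) (Finset.mem_univ i)
    have h2 : W i = Vs i := hmain i
    show U i ≤ W i
    rw [h2]
    linarith
end

section
/- Exact policy iteration on a finite MDP terminates: starting from any deterministic policy π₀ and repeatedly setting π_{l+1} to a greedy policy with respect to V^{π_l} (with ties broken so that π_{l+1} = π_l whenever π_l is already greedy for itself), the sequence of value functions V^{π_l} is monotonically nondecreasing componentwise and becomes stationary after at most |A|^{|S|} iterations, at which point V^{π_l} = V*, the optimal value function. -/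
open scoped BigOperators

theorem policy_iteration_terminates
    {S A : Type*} [Fintype S] [Fintype A] [Nonempty A]
    (P R : S → A → S → ℝ) (γ : ℝ)
    (hγ0 : 0 ≤ γ) (hγ1 : γ < 1)
    (hP0 : ∀ i k i', 0 ≤ P i k i') (hP1 : ∀ i k, ∑ i' : S, P i k i' = 1)
    (val : (S → A) → S → ℝ)
    (hval : ∀ (g : S → A) (i : S),
      val g i = ∑ i' : S, P i (g i) i' * (R i (g i) i' + γ * val g i'))
    (Vstar : S → ℝ)
    (hVstar : ∀ i, Vstar i = Finset.univ.sup' Finset.univ_nonempty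
      (fun k : A => ∑ i' : S, P i k i' * (R i k i' + γ * Vstar i')))
    (π : ℕ → S → A)
    (hgreedy : ∀ l i k,
      (∑ i' : S, P i k i' * (R i k i' + γ * val (π l) i'))
        ≤ ∑ i' : S, P i (π (l+1) i) i' * (R i (π (l+1) i) i' + γ * val (π l) i'))
    (htie : ∀ l,
      (∀ i k, (∑ i' : S, P i k i' * (R i k i' + γ * val (π l) i'))
          ≤ ∑ i' : S, P i (π l i) i' * (R i (π l i) i' + γ * val (π l) i')) →
      π (l+1) = π l) :
    (∀ l i, val (π l) i ≤ val (π (l+1)) i) ∧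
    ∃ L : ℕ, L ≤ Fintype.card A ^ Fintype.card S ∧
      ∀ l, L ≤ l → π (l+1) = π l ∧ val (π l) = Vstar := by
  classical
  -- abbreviation for the Q-value
  let q : S → A → (S → ℝ) → ℝ := fun i k V => ∑ i' : S, P i k i' * (R i k i' + γ * V i')
  have hval' : ∀ (g : S → A) (i : S), val g i = q i (g i) (val g) := hval
  have hgreedy' : ∀ l i k, q i k (val (π l)) ≤ q i (π (l+1) i) (val (π l)) := hgreedy
  have hVstar' : ∀ i, Vstar i = Finset.univ.sup' Finset.univ_nonempty
      (fun k : A => q i k Vstar) := hVstar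
  -- sum bounds
  have sum_ge : ∀ i k (d : S → ℝ) (m : ℝ), (∀ j, m ≤ d j) → m ≤ ∑ j : S, P i k j * d j := by
    intro i k d m h
    calc m = (∑ j : S, P i k j) * m := by rw [hP1, one_mul]
    _ = ∑ j : S, P i k j * m := by rw [Finset.sum_mul]
    _ ≤ ∑ j : S, P i k j * d j :=
        Finset.sum_le_sum fun j _ => mul_le_mul_of_nonneg_left (h j) (hP0 i k j)
  have sum_le : ∀ i k (d : S → ℝ) (m : ℝ), (∀ j, d j ≤ m) → (∑ j : S, P i k j * d j) ≤ m := by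
    intro i k d m h
    calc (∑ j : S, P i k j * d j) ≤ ∑ j : S, P i k j * m :=
        Finset.sum_le_sum fun j _ => mul_le_mul_of_nonneg_left (h j) (hP0 i k j)
    _ = (∑ j : S, P i k j) * m := by rw [Finset.sum_mul]
    _ = m := by rw [hP1, one_mul]
  have qmono : ∀ i k (V W : S → ℝ), (∀ j, V j ≤ W j) → q i k V ≤ q i k W := by
    intro i k V W h
    apply Finset.sum_le_sum
    intro j _
    have h1 : γ * V j ≤ γ * W j := mul_le_mul_of_nonneg_left (h j) hγ0
    exact mul_le_mul_of_nonneg_left (add_le_add le_rfl h1) (hP0 i k j)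
  have qdiff : ∀ i k (V W : S → ℝ),
      q i k W - q i k V = γ * ∑ j : S, P i k j * (W j - V j) := by
    intro i k V W
    show (∑ j : S, P i k j * (R i k j + γ * W j)) - (∑ j : S, P i k j * (R i k j + γ * V j))
      = γ * ∑ j : S, P i k j * (W j - V j)
    rw [Finset.mul_sum, ← Finset.sum_sub_distrib]
    exact Finset.sum_congr rfl fun j _ => by ring
  -- comparison lemma: subsolutions are below the policy value
  have cmp : ∀ (g : S → A) (W : S → ℝ), (∀ i, W i ≤ q i (g i) W) → ∀ i, W i ≤ val g i := by
    intro g W h i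
    set d : S → ℝ := fun j => val g j - W j with hd
    obtain ⟨i0, -, hmin⟩ := Finset.exists_min_image Finset.univ d ⟨i, Finset.mem_univ i⟩
    have h1 : γ * d i0 ≤ d i0 := by
      have h3 : d i0 ≤ ∑ j : S, P i0 (g i0) j * d j :=
        sum_ge i0 (g i0) d (d i0) fun j => hmin j (Finset.mem_univ j)
      have h4 : q i0 (g i0) (val g) - q i0 (g i0) W = γ * ∑ j : S, P i0 (g i0) j * d j :=
        qdiff i0 (g i0) W (val g)
      have h5 : γ * d i0 ≤ γ * ∑ j : S, P i0 (g i0) j * d j :=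
        mul_le_mul_of_nonneg_left h3 hγ0
      have h6 : W i0 ≤ q i0 (g i0) W := h i0
      have h7 : val g i0 = q i0 (g i0) (val g) := hval' g i0
      simp only [hd] at *
      linarith
    have h0 : 0 ≤ d i0 := by nlinarith
    have := hmin i (Finset.mem_univ i)
    simp only [hd] at *
    linarith
  -- part 1: monotone improvement
  have mono : ∀ l i, val (π l) i ≤ val (π (l+1)) i := by
    intro l i
    apply cmp (π (l+1)) (val (π l)) _ i
    intro j
    calc val (π l) j = q j (π l j) (val (π l)) := hval' (π l) j
    _ ≤ q j (π (l+1) j) (val (π l)) := hgreedy' l j (π l j)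
  -- strict improvement when policy changes
  have strict : ∀ l, π (l+1) ≠ π l → ∃ i, val (π l) i < val (π (l+1)) i := by
    intro l hne
    have hn := mt (htie l) hne
    push_neg at hn
    obtain ⟨i, k, hik⟩ := hn
    refine ⟨i, ?_⟩
    calc val (π l) i = q i (π l i) (val (π l)) := hval' (π l) i
    _ < q i k (val (π l)) := hik
    _ ≤ q i (π (l+1) i) (val (π l)) := hgreedy' l i k
    _ ≤ q i (π (l+1) i) (val (π (l+1))) := qmono _ _ _ _ (mono l)
    _ = val (π (l+1)) i := (hval' (π (l+1)) i).symm
  -- uniqueness: self-greedy value equals Vstar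
  have uniq : ∀ (g : S → A) (W : S → ℝ), (∀ i, W i = q i (g i) W) →
      (∀ i k, q i k W ≤ W i) → W = Vstar := by
    intro g W hfix hub
    funext i
    set e : S → ℝ := fun j => W j - Vstar j with he
    -- lower bound: Vstar ≤ W
    have hge : ∀ j, 0 ≤ e j := by
      obtain ⟨i0, -, hmin⟩ := Finset.exists_min_image Finset.univ e ⟨i, Finset.mem_univ i⟩
      intro j
      obtain ⟨k, -, hk⟩ := Finset.exists_mem_eq_sup' (Finset.univ_nonempty)
        (fun k : A => q i0 k Vstar)
      have hVk : Vstar i0 = q i0 k Vstar := by rw [hVstar' i0, hk]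
      have h3 : e i0 ≤ ∑ j' : S, P i0 k j' * e j' :=
        sum_ge i0 k e (e i0) fun j' => hmin j' (Finset.mem_univ j')
      have h4 : q i0 k W - q i0 k Vstar = γ * ∑ j' : S, P i0 k j' * e j' :=
        qdiff i0 k Vstar W
      have h5 : γ * e i0 ≤ γ * ∑ j' : S, P i0 k j' * e j' :=
        mul_le_mul_of_nonneg_left h3 hγ0
      have h6 : q i0 k W ≤ W i0 := hub i0 k
      have h1 : γ * e i0 ≤ e i0 := by
        simp only [he] at *
        linarith
      have h0 : 0 ≤ e i0 := by nlinarith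
      exact le_trans h0 (hmin j (Finset.mem_univ j))
    -- upper bound: W ≤ Vstar
    have hle : ∀ j, e j ≤ 0 := by
      obtain ⟨i1, -, hmax⟩ := Finset.exists_max_image Finset.univ e ⟨i, Finset.mem_univ i⟩
      intro j
      have hVk : q i1 (g i1) Vstar ≤ Vstar i1 := by
        rw [hVstar' i1]
        exact Finset.le_sup' (fun k : A => q i1 k Vstar) (Finset.mem_univ (g i1))
      have h3 : (∑ j' : S, P i1 (g i1) j' * e j') ≤ e i1 :=
        sum_le i1 (g i1) e (e i1) fun j' => hmax j' (Finset.mem_univ j')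
      have h4 : q i1 (g i1) W - q i1 (g i1) Vstar = γ * ∑ j' : S, P i1 (g i1) j' * e j' :=
        qdiff i1 (g i1) Vstar W
      have h5 : γ * ∑ j' : S, P i1 (g i1) j' * e j' ≤ γ * e i1 :=
        mul_le_mul_of_nonneg_left h3 hγ0
      have h6 : W i1 = q i1 (g i1) W := hfix i1
      have h1 : e i1 ≤ γ * e i1 := by
        simp only [he] at *
        linarith
      have h0 : e i1 ≤ 0 := by nlinarith
      exact le_trans (hmax j (Finset.mem_univ j)) h0
    have := hge i
    have := hle i
    simp only [he] at *
    linarith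
  refine ⟨mono, ?_⟩
  -- stationarity propagation
  have hstep : ∀ l, π (l+1) = π l → (π (l+1+1) = π (l+1) ∧ val (π l) = Vstar) := by
    intro l hl
    have hub : ∀ i k, q i k (val (π l)) ≤ val (π l) i := by
      intro i k
      calc q i k (val (π l)) ≤ q i (π (l+1) i) (val (π l)) := hgreedy' l i k
      _ = q i (π l i) (val (π l)) := by rw [hl]
      _ = val (π l) i := (hval' (π l) i).symm
    have hVeq : val (π l) = Vstar := uniq (π l) (val (π l)) (hval' (π l)) hub
    refine ⟨?_, hVeq⟩
    apply htie (l+1)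
    intro i k
    show q i k (val (π (l+1))) ≤ q i (π (l+1) i) (val (π (l+1)))
    rw [hl]
    exact le_trans (hub i k) (le_of_eq (hval' (π l) i))
  -- chain of values is monotone over intervals
  have chain : ∀ a b, a ≤ b → ∀ i, val (π a) i ≤ val (π b) i := by
    intro a b hab
    induction b, hab using Nat.le_induction with
    | base => intro i; exact le_refl _
    | succ b hab ih => intro i; exact le_trans (ih i) (mono b i)
  -- pigeonhole on the finite policy space
  set N := Fintype.card A ^ Fintype.card S with hN
  have hcard : Fintype.card (S → A) = N := by rw [hN, Fintype.card_fun]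
  obtain ⟨a, ha, b, hb, hab, hπab⟩ :=
    Finset.exists_ne_map_eq_of_card_lt_of_maps_to
      (s := Finset.range (N+1)) (t := (Finset.univ : Finset (S → A)))
      (by simp [hcard]) (fun x _ => Finset.mem_univ (π x))
  -- wlog a < b
  wlog hlt : a < b generalizing a b
  · exact this b hb a ha (Ne.symm hab) hπab.symm (lt_of_le_of_ne (not_lt.mp hlt) (Ne.symm hab))
  -- values are constant on [a, b], so π (a+1) = π a
  have hvab : val (π a) = val (π b) := by rw [hπab]
  have heqa1 : ∀ i, val (π (a+1)) i = val (π a) i := by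
    intro i
    have h1 : val (π a) i ≤ val (π (a+1)) i := mono a i
    have h2 : val (π (a+1)) i ≤ val (π b) i := chain (a+1) b hlt i
    have h3 : val (π b) i = val (π a) i := by rw [hvab]
    linarith
  have hπa1 : π (a+1) = π a := by
    by_contra hne
    obtain ⟨i, hi⟩ := strict a hne
    have := heqa1 i
    linarith
  -- from a on, stationary
  refine ⟨a, ?_, ?_⟩
  · have : b ≤ N := Nat.lt_succ_iff.mp (Finset.mem_range.mp hb)
    omega
  · intro l hl
    induction l, hl using Nat.le_induction with
    | base => exact ⟨hπa1, (hstep a hπa1).2⟩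
    | succ l hl ih =>
      obtain ⟨h1, h2⟩ := ih
      refine ⟨(hstep l h1).1, ?_⟩
      rw [h1, h2]
end

section
/- Pre-determination validity in branch-and-bound: let M = [m^l, m^u] be a box of tree parameters and suppose for a state i the set T_{z_i} ⊆ leaves of leaves reachable by i under every m ∈ M is such that for some action k, the leaf-action bounds satisfy c^l_{kt} = c^u_{kt} = 1 for all t ∈ T_{z_i}. Then for every feasible tree m ∈ M, state i is assigned action k, and hence its contribution to the objective equals Q_{ik} for all m ∈ M and all descendants M' ⊆ M. -/
open scoped BigOperators

theorem predetermination_valid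
    {M L A S : Type*} [Fintype A]
    (Mbox : Set M)                 -- the box [m^l, m^u] of feasible tree parameters
    (c : M → A → L → ℝ)            -- leaf-action indicators of a parameter vector
    (leafOf : M → S → L)           -- the leaf reached by a state under given parameters
    (i : S)
    (Tz : Set L) (hTz : ∀ m ∈ Mbox, leafOf m i ∈ Tz)
    (cl cu : A → L → ℝ)
    (hbounds : ∀ m ∈ Mbox, ∀ k t, cl k t ≤ c m k t ∧ c m k t ≤ cu k t)
    (h01 : ∀ m ∈ Mbox, ∀ k t, c m k t = 0 ∨ c m k t = 1)
    (honehot : ∀ m ∈ Mbox, ∀ t, ∑ k : A, c m k t = 1)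
    (k : A) (hk : ∀ t ∈ Tz, cl k t = 1 ∧ cu k t = 1)
    (Q : S → A → ℝ) :
    (∀ m ∈ Mbox, c m k (leafOf m i) = 1) ∧
    (∀ m ∈ Mbox, ∑ k' : A, c m k' (leafOf m i) * Q i k' = Q i k) ∧
    (∀ M' ⊆ Mbox, ∀ m ∈ M', ∑ k' : A, c m k' (leafOf m i) * Q i k' = Q i k) := by

  classical
  have key : ∀ m ∈ Mbox, c m k (leafOf m i) = 1 := by
    intro m hm
    have ht := hTz m hm
    have hb := hbounds m hm k (leafOf m i)
    have hkk := hk _ ht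
    linarith [hb.1, hb.2, hkk.1, hkk.2]
  have sum : ∀ m ∈ Mbox, ∑ k' : A, c m k' (leafOf m i) * Q i k' = Q i k := by
    intro m hm
    set t := leafOf m i with htdef
    have hzero : ∀ k' : A, k' ≠ k → c m k' t = 0 := by
      intro k' hne
      have hsum := honehot m hm t
      have h1 : c m k t = 1 := key m hm
      have hnn : ∀ j : A, 0 ≤ c m j t := by
        intro j
        rcases h01 m hm j t with h | h <;> simp [h]
      by_contra h0
      have h1' : c m k' t = 1 := by
        rcases h01 m hm k' t with h | h
        · exact absurd h h0
        · exact h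
      have hge : (2 : ℝ) ≤ ∑ j : A, c m j t := by
        have := Finset.sum_le_sum_of_subset_of_nonneg
          (Finset.insert_subset_iff.mpr ⟨Finset.mem_univ k', by simp⟩ : ({k', k} : Finset A) ⊆ Finset.univ)
          (fun j _ _ => hnn j)
        rw [Finset.sum_insert (by simp [hne]), Finset.sum_singleton, h1, h1'] at this
        linarith
      linarith
    rw [Finset.sum_eq_single k]
    · rw [key m hm, one_mul]
    · intro b _ hb
      rw [hzero b hb, zero_mul]
    · intro h; exact absurd (Finset.mem_univ k) h
  exact ⟨key, sum, fun M' hM' m hm => sum m (hM' hm)⟩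
end
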